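/- Under the random sign model, for any constant ε₄ ∈ (0,1) there exists a constant C > 0 such that if p₀ ≥ C·n·(log n)³/K_min² and p₀ ≥ C·n²·(log n)³/K_min⁴ (conditions implied by the assumption K_min ≥ C_k·√(n(log n)⁴/p₀) of Theorem 3 for C_k large enough), then with probability at least 1 − c·n^{−10} for some constant c > 0, ‖P_T(sgn(B*))‖_∞ ≤ ε₄·p₀/log n. -/

import Mathlib

open Matrix MeasureTheory

open scoped Classical

/-- Keep the entries of `M` indexed by `S` and zero out the rest. -/
noncomputable def projS {n : ℕ} (S : Set (Fin n × Fin n)) (M : Matrix (Fin n) (Fin n) ℝ) :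
    Matrix (Fin n) (Fin n) ℝ :=
  Matrix.of fun i j => if (i, j) ∈ S then M i j else 0

/-- Zero out the entries of `M` indexed by `S` (projection onto the complement). -/
noncomputable def zeroOn {n : ℕ} (S : Set (Fin n × Fin n)) (M : Matrix (Fin n) (Fin n) ℝ) :
    Matrix (Fin n) (Fin n) ℝ :=
  Matrix.of fun i j => if (i, j) ∈ S then 0 else M i j

/-- Entrywise ℓ₁ norm. -/
noncomputable def l1Norm {n : ℕ} (M : Matrix (Fin n) (Fin n) ℝ) : ℝ := ∑ i, ∑ j, |M i j|

/-- Entrywise ℓ∞ norm (max of absolute values of the entries). -/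
noncomputable def linfNorm {n : ℕ} (M : Matrix (Fin n) (Fin n) ℝ) : ℝ :=
  sSup (Set.range fun q : Fin n × Fin n => |M q.1 q.2|)

/-- Frobenius norm. -/
noncomputable def frobNorm {n : ℕ} (M : Matrix (Fin n) (Fin n) ℝ) : ℝ :=
  Real.sqrt (∑ i, ∑ j, (M i j) ^ 2)

/-- Nuclear norm: the sum of the singular values, i.e. the trace of `√(MᴴM)`. -/
noncomputable def nuclearNorm {n : ℕ} (M : Matrix (Fin n) (Fin n) ℝ) : ℝ :=
  ((((Matrix.posSemidef_conjTranspose_mul_self M).1.eigenvectorUnitary : Matrix (Fin n) (Fin n) ℝ) *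
      Matrix.diagonal ((RCLike.ofReal : ℝ → ℝ) ∘ (Real.sqrt ∘ (Matrix.posSemidef_conjTranspose_mul_self M).1.eigenvalues)) *
      (star (Matrix.posSemidef_conjTranspose_mul_self M).1.eigenvectorUnitary : Matrix (Fin n) (Fin n) ℝ))).trace

/-- Spectral norm: the operator norm as a map between Euclidean spaces. -/
noncomputable def specNorm {m l : Type*} [Fintype m] [Fintype l] [DecidableEq l]
    (M : Matrix m l ℝ) : ℝ :=
  ‖LinearMap.toContinuousLinearMap (Matrix.toEuclideanLin M)‖

/-- Entrywise sign matrix. -/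
noncomputable def sgnMat {n : ℕ} (M : Matrix (Fin n) (Fin n) ℝ) : Matrix (Fin n) (Fin n) ℝ :=
  Matrix.of fun i j => Real.sign (M i j)

/-- The support of a matrix, as a set of index pairs. -/
def suppSet {n : ℕ} (M : Matrix (Fin n) (Fin n) ℝ) : Set (Fin n × Fin n) :=
  {q | M q.1 q.2 ≠ 0}

/-- A matrix is a valid clustering matrix iff for some assignment of nodes to clusters,
`K i j = 1` when `i, j` are in the same cluster and `K i j = 0` otherwise. -/
def IsValidClustering {n : ℕ} (K : Matrix (Fin n) (Fin n) ℝ) : Prop :=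
  ∃ f : Fin n → Fin n, ∀ i j, K i j = if f i = f j then 1 else 0

/-- Objective of the convex program CP_η. -/
noncomputable def cpObj {n : ℕ} (η : ℝ) (B K : Matrix (Fin n) (Fin n) ℝ) : ℝ :=
  η * l1Norm B + (1 - η) * nuclearNorm K

/-- Feasibility for the convex program: `P_Ωobs (B + K) = P_Ωobs (I + A)`. -/
def cpFeasible {n : ℕ} (Obs : Set (Fin n × Fin n)) (A B K : Matrix (Fin n) (Fin n) ℝ) : Prop :=
  projS Obs (B + K) = projS Obs (1 + A)

/-- Number of observed disagreements of the clustering matrix `K` with the observed graph. -/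
noncomputable def disagreements {n : ℕ} (Obs : Set (Fin n × Fin n))
    (A K : Matrix (Fin n) (Fin n) ℝ) : ℕ :=
  {q : Fin n × Fin n | q.1 ≠ q.2 ∧ q ∈ Obs ∧ A q.1 q.2 ≠ K q.1 q.2}.ncard

/-- Size of cluster `j` under the assignment `c`. -/
noncomputable def clusterSize {n p : ℕ} (c : Fin n → Fin p) (j : Fin p) : ℕ :=
  {i : Fin n | c i = j}.ncard

/-- Minimum cluster size. -/
noncomputable def KminVal {n p : ℕ} (c : Fin n → Fin p) : ℕ :=
  sInf (Set.range fun j => clusterSize c j)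

/-- The valid clustering matrix associated to the assignment `c`. -/
noncomputable def Kmat {n p : ℕ} (c : Fin n → Fin p) : Matrix (Fin n) (Fin n) ℝ :=
  Matrix.of fun i j => if c i = c j then 1 else 0

/-- The matrix of observed disagreements of the clustering `c`. -/
noncomputable def Bstar {n p : ℕ} (Obs : Set (Fin n × Fin n)) (A : Matrix (Fin n) (Fin n) ℝ)
    (c : Fin n → Fin p) : Matrix (Fin n) (Fin n) ℝ :=
  projS Obs (A + 1 - Kmat c)

/-- Index set of Γ: observed non-disagreement entries (includes the diagonal). -/
def GammaSet {n p : ℕ} (Obs : Set (Fin n × Fin n)) (A : Matrix (Fin n) (Fin n) ℝ)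
    (c : Fin n → Fin p) : Set (Fin n × Fin n) :=
  {q | q ∈ Obs ∧ Bstar Obs A c q.1 q.2 = 0}

/-- The matrix `U` whose `j`-th column is `K_j^{-1/2}` on the indices of cluster `j`. -/
noncomputable def Umat {n p : ℕ} (c : Fin n → Fin p) : Matrix (Fin n) (Fin p) ℝ :=
  Matrix.of fun i j => if c i = j then (Real.sqrt (clusterSize c j))⁻¹ else 0

/-- The subspace `T = {U Xᵀ + Y Uᵀ}` as a set of matrices. -/
def Tspace {n p : ℕ} (U : Matrix (Fin n) (Fin p) ℝ) : Set (Matrix (Fin n) (Fin n) ℝ) :=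
  {M | ∃ X Y : Matrix (Fin n) (Fin p) ℝ, M = U * Xᵀ + Y * Uᵀ}

/-- Orthogonal projection onto `T`. -/
noncomputable def PT {n p : ℕ} (U : Matrix (Fin n) (Fin p) ℝ) (M : Matrix (Fin n) (Fin n) ℝ) :
    Matrix (Fin n) (Fin n) ℝ :=
  U * Uᵀ * M + M * (U * Uᵀ) - U * Uᵀ * M * (U * Uᵀ)

/-- `d_{i,k}`: number of "bad" (unobserved or disagreeing) entries between node `i`
and cluster `k`. -/
noncomputable def dval {n p : ℕ} (Obs : Set (Fin n × Fin n)) (A : Matrix (Fin n) (Fin n) ℝ)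
    (c : Fin n → Fin p) (i : Fin n) (k : Fin p) : ℕ :=
  if k = c i then {j : Fin n | c j = k ∧ ((i, j) ∉ Obs ∨ A i j = 0)}.ncard
  else {j : Fin n | c j = k ∧ ((i, j) ∉ Obs ∨ A i j = 1)}.ncard

/-- `D_max`: the largest fraction of bad entries between a node and a cluster. -/
noncomputable def Dmax {n p : ℕ} (Obs : Set (Fin n × Fin n)) (A : Matrix (Fin n) (Fin n) ℝ)
    (c : Fin n → Fin p) : ℝ :=
  sSup (Set.range fun q : Fin n × Fin p =>
    (dval Obs A c q.1 q.2 : ℝ) / min (clusterSize c q.2 : ℝ) (clusterSize c (c q.1) : ℝ))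

/-- Upper-triangular index pairs on `n` nodes: unordered node pairs. -/
def UT (n : ℕ) : Type := {q : Fin n × Fin n // q.1 < q.2}

instance {n : ℕ} : Fintype (UT n) := by unfold UT; infer_instance
instance {n : ℕ} : DecidableEq (UT n) := by unfold UT; infer_instance
instance {n : ℕ} : MeasurableSpace (UT n) := ⊤

/-- Read off a symmetric function on pairs from its upper-triangular values. -/
def symget {n : ℕ} {α : Type*} (d : α) (f : UT n → α) (i j : Fin n) : α :=
  if h : i < j then f ⟨(i, j), h⟩ else if h' : j < i then f ⟨(j, i), h'⟩ else d

/-- The discrete measure on a finite type with weight function `w`. -/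
noncomputable def discMeasure {Ω : Type*} [Fintype Ω] [MeasurableSpace Ω] (w : Ω → ℝ) :
    MeasureTheory.Measure Ω :=
  ∑ ω : Ω, ENNReal.ofReal (w ω) • MeasureTheory.Measure.dirac ω

/-- The ideal adjacency matrix `K* - I` of the clustering `c`. -/
noncomputable def idealAdj {n p : ℕ} (c : Fin n → Fin p) : Matrix (Fin n) (Fin n) ℝ :=
  Matrix.of fun i j => if i ≠ j ∧ c i = c j then 1 else 0

/-- The adjacency matrix obtained from the ideal one by flipping the pairs in `f`. -/
noncomputable def AOf {n p : ℕ} (c : Fin n → Fin p) (f : UT n → Bool) :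
    Matrix (Fin n) (Fin n) ℝ :=
  Matrix.of fun i j => if symget false f i j then 1 - idealAdj c i j else idealAdj c i j

/-- The set of observed pairs determined by the observation indicators `o`
(the diagonal is always observed). -/
def ObsOf {n : ℕ} (o : UT n → Bool) : Set (Fin n × Fin n) :=
  {q | q.1 = q.2 ∨ symget false o q.1 q.2 = true}

/-- The symmetric set of off-diagonal pairs determined by the indicators `γ`. -/
def GamOf {n : ℕ} (γ : UT n → Bool) : Set (Fin n × Fin n) :=
  {q | q.1 ≠ q.2 ∧ symget false γ q.1 q.2 = true}

/-- The operator `R_Γ`: keep the diagonal, rescale by `q⁻¹` the off-diagonal entries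
in `Γ`, and zero out the remaining entries. -/
noncomputable def Rop {n : ℕ} (G : Set (Fin n × Fin n)) (q : ℝ)
    (M : Matrix (Fin n) (Fin n) ℝ) : Matrix (Fin n) (Fin n) ℝ :=
  Matrix.of fun i j => if i = j then M i j else if (i, j) ∈ G then q⁻¹ * M i j else 0

/-- The random sign matrix `sgn(B*)`: the first indicator decides whether the entry is
nonzero, the second decides its sign. -/
noncomputable def sgnOf {n : ℕ} (σ : UT n → Bool × Bool) : Matrix (Fin n) (Fin n) ℝ :=
  Matrix.of fun i j =>
    if i = j then 0
    else if (symget (false, false) σ i j).1 then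
      (if (symget (false, false) σ i j).2 then 1 else -1)
    else 0


-- ## Auxiliary lemmas

section basic
variable {Ω : Type*} [Fintype Ω] [MeasurableSpace Ω] [MeasurableSingletonClass Ω]

lemma discMeasure_apply (w : Ω → ℝ) (hw : ∀ σ, 0 ≤ w σ) (s : Set Ω) :
    discMeasure w s = ENNReal.ofReal (∑ σ ∈ Finset.univ.filter (· ∈ s), w σ) := by
  rw [discMeasure, Measure.finset_sum_apply]
  rw [ENNReal.ofReal_sum_of_nonneg (fun i _ => hw i)]
  rw [Finset.sum_filter]
  congr 1
  ext σ
  rw [Measure.smul_apply, Measure.dirac_apply, smul_eq_mul]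
  by_cases h : σ ∈ s <;> simp [h]

lemma discMeasure_univ (w : Ω → ℝ) (hw : ∀ σ, 0 ≤ w σ) :
    discMeasure w Set.univ = ENNReal.ofReal (∑ σ, w σ) := by
  rw [discMeasure_apply w hw]
  congr 1
  symm
  apply Finset.sum_subset
  · intro x _
    simp only [Finset.mem_filter]
    exact ⟨Finset.mem_univ x, trivial⟩
  · intro x _ hx
    exact (hx (Finset.mem_univ x)).elim

end basic

/-- sign value of an entry -/
noncomputable def PTg : Bool × Bool → ℝ := fun b => if b.1 then (if b.2 then 1 else (-1)) else 0

/-- edge weight -/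
noncomputable def PTwe (pt : ℝ) : Bool × Bool → ℝ := fun b => (if b.1 then pt else 1 - pt) * (1 / 2)

lemma PTwe_nonneg {pt : ℝ} (h0 : 0 ≤ pt) (h1 : pt ≤ 1) (b : Bool × Bool) : 0 ≤ PTwe pt b := by
  unfold PTwe; cases b.1 <;> simp <;> linarith

lemma PTwe_sum (pt : ℝ) : ∑ b : Bool × Bool, PTwe pt b = 1 := by
  rw [Fintype.sum_prod_type]
  simp [PTwe]
  ring

lemma exp_quad {x : ℝ} (hx : |x| ≤ 1) : Real.exp x ≤ 1 + x + x ^ 2 := by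
  have h := Real.exp_bound hx (n := 2) (by norm_num)
  have h2 : ∑ m ∈ Finset.range 2, x ^ m / m.factorial = 1 + x := by
    simp [Finset.sum_range_succ]
  rw [h2] at h
  have h3 : |x| ^ 2 = x ^ 2 := sq_abs x
  rw [h3] at h
  have h4 : ((Nat.succ 2 : ℕ) : ℝ) / ((Nat.factorial 2 : ℕ) * ((2:ℕ):ℝ)) = 3 / 4 := by
    norm_num [Nat.factorial]
  rw [h4] at h
  have := abs_le.mp h
  nlinarith [sq_nonneg x]

lemma PT_mgf {pt pp x : ℝ} (h0 : 0 ≤ pt) (h1 : pt ≤ 1) (hpp : pt ≤ pp) (hx : |x| ≤ 1) :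
    ∑ b : Bool × Bool, PTwe pt b * Real.exp (x * PTg b) ≤ Real.exp (pp * x ^ 2) := by
  have hsum : ∑ b : Bool × Bool, PTwe pt b * Real.exp (x * PTg b)
      = 1 + pt * ((Real.exp x + Real.exp (-x)) / 2 - 1) := by
    rw [Fintype.sum_prod_type]
    simp [PTwe, PTg, mul_one, mul_zero, Real.exp_zero, mul_neg_one]
    ring
  rw [hsum]
  have hcosh : (Real.exp x + Real.exp (-x)) / 2 - 1 ≤ x ^ 2 := by
    have h1' := exp_quad hx
    have h2' := exp_quad (x := -x) (by rwa [abs_neg])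
    nlinarith [sq_nonneg x]
  have hppn : 0 ≤ pp := le_trans h0 hpp
  have : pt * ((Real.exp x + Real.exp (-x)) / 2 - 1) ≤ pp * x ^ 2 := by
    calc pt * ((Real.exp x + Real.exp (-x)) / 2 - 1) ≤ pt * x ^ 2 :=
          mul_le_mul_of_nonneg_left hcosh h0
      _ ≤ pp * x ^ 2 := mul_le_mul_of_nonneg_right hpp (sq_nonneg x)
  have hexp := Real.add_one_le_exp (pp * x ^ 2)
  linarith

section chernoff
variable {n : ℕ}

lemma PT_chernoff (pt pp t a cst : ℝ) (E : Finset (UT n))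
    (h0 : 0 ≤ pt) (h1 : pt ≤ 1) (hpp : pt ≤ pp)
    (ht : 0 ≤ t) (htc : |t * cst| ≤ 1) :
    ∑ σ ∈ Finset.univ.filter (fun σ : UT n → Bool × Bool =>
        a ≤ cst * ∑ e ∈ E, PTg (σ e)), (∏ e, PTwe pt (σ e))
      ≤ Real.exp (pp * (t * cst) ^ 2 * E.card - t * a) := by
  classical
  set F : UT n → (Bool × Bool) → ℝ :=
    fun e b => PTwe pt b * Real.exp ((if e ∈ E then t * cst else 0) * PTg b) with hF
  have hwnn : ∀ σ : UT n → Bool × Bool, 0 ≤ ∏ e, PTwe pt (σ e) :=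
    fun σ => Finset.prod_nonneg fun e _ => PTwe_nonneg h0 h1 _
  have step1 : ∑ σ ∈ Finset.univ.filter (fun σ : UT n → Bool × Bool =>
        a ≤ cst * ∑ e ∈ E, PTg (σ e)), (∏ e, PTwe pt (σ e))
      ≤ ∑ σ : UT n → Bool × Bool,
          (∏ e, PTwe pt (σ e)) * Real.exp (t * (cst * ∑ e ∈ E, PTg (σ e)) - t * a) := by
    calc ∑ σ ∈ Finset.univ.filter (fun σ : UT n → Bool × Bool =>
        a ≤ cst * ∑ e ∈ E, PTg (σ e)), (∏ e, PTwe pt (σ e))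
        ≤ ∑ σ ∈ Finset.univ.filter (fun σ : UT n → Bool × Bool =>
            a ≤ cst * ∑ e ∈ E, PTg (σ e)),
            (∏ e, PTwe pt (σ e)) * Real.exp (t * (cst * ∑ e ∈ E, PTg (σ e)) - t * a) := by
          apply Finset.sum_le_sum
          intro σ hσ
          have hσ' := (Finset.mem_filter.mp hσ).2
          have harg : 0 ≤ t * (cst * ∑ e ∈ E, PTg (σ e)) - t * a := by
            have : 0 ≤ t * ((cst * ∑ e ∈ E, PTg (σ e)) - a) :=
              mul_nonneg ht (by linarith)
            linarith [this, mul_sub t (cst * ∑ e ∈ E, PTg (σ e)) a]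
          exact le_mul_of_one_le_right (hwnn σ) (Real.one_le_exp harg)
      _ ≤ _ := Finset.sum_le_sum_of_subset_of_nonneg (Finset.filter_subset _ _)
          (fun σ _ _ => mul_nonneg (hwnn σ) (Real.exp_pos _).le)
  have step2 : ∀ σ : UT n → Bool × Bool,
      (∏ e, PTwe pt (σ e)) * Real.exp (t * (cst * ∑ e ∈ E, PTg (σ e)) - t * a)
      = Real.exp (- (t * a)) * ∏ e, F e (σ e) := by
    intro σ
    have hsum : t * (cst * ∑ e ∈ E, PTg (σ e))
        = ∑ e : UT n, (if e ∈ E then t * cst else 0) * PTg (σ e) := by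
      rw [Finset.mul_sum, Finset.mul_sum]
      have : ∀ e : UT n, (if e ∈ E then t * cst else 0) * PTg (σ e)
          = if e ∈ E then t * (cst * PTg (σ e)) else 0 := by
        intro e; split <;> ring
      simp_rw [this]
      rw [Finset.sum_ite_mem, Finset.univ_inter]
    rw [sub_eq_add_neg, Real.exp_add, hsum, Real.exp_sum]
    simp only [hF]
    rw [Finset.prod_mul_distrib]
    ring
  have step3 : ∑ σ : UT n → Bool × Bool, ∏ e, F e (σ e) = ∏ e : UT n, ∑ b, F e b :=
    (Fintype.prod_sum F).symm
  have step4 : ∏ e : UT n, ∑ b, F e b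
      ≤ ∏ e : UT n, Real.exp (pp * (if e ∈ E then t * cst else 0) ^ 2) := by
    apply Finset.prod_le_prod
    · intro e _
      exact Finset.sum_nonneg fun b _ =>
        mul_nonneg (PTwe_nonneg h0 h1 b) (Real.exp_pos _).le
    · intro e _
      apply PT_mgf h0 h1 hpp
      split
      · exact htc
      · simp
  have step5 : ∏ e : UT n, Real.exp (pp * (if e ∈ E then t * cst else 0) ^ 2)
      = Real.exp (pp * (t * cst) ^ 2 * E.card) := by
    rw [← Real.exp_sum]
    congr 1
    have : ∀ e : UT n, pp * (if e ∈ E then t * cst else 0) ^ 2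
        = if e ∈ E then pp * (t * cst) ^ 2 else 0 := by
      intro e; split <;> simp
    simp_rw [this]
    rw [Finset.sum_ite_mem, Finset.univ_inter, Finset.sum_const, nsmul_eq_mul]
    ring
  calc ∑ σ ∈ Finset.univ.filter (fun σ : UT n → Bool × Bool =>
        a ≤ cst * ∑ e ∈ E, PTg (σ e)), (∏ e, PTwe pt (σ e))
      ≤ ∑ σ : UT n → Bool × Bool,
          (∏ e, PTwe pt (σ e)) * Real.exp (t * (cst * ∑ e ∈ E, PTg (σ e)) - t * a) := step1
    _ = Real.exp (- (t * a)) * ∑ σ : UT n → Bool × Bool, ∏ e, F e (σ e) := by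
        rw [Finset.mul_sum]; exact Finset.sum_congr rfl fun σ _ => step2 σ
    _ = Real.exp (- (t * a)) * ∏ e : UT n, ∑ b, F e b := by rw [step3]
    _ ≤ Real.exp (- (t * a)) * Real.exp (pp * (t * cst) ^ 2 * E.card) := by
        apply mul_le_mul_of_nonneg_left _ (Real.exp_pos _).le
        exact le_trans step4 (le_of_eq step5)
    _ = Real.exp (pp * (t * cst) ^ 2 * E.card - t * a) := by
        rw [← Real.exp_add]; ring_nf

lemma PT_chernoff_abs (pt pp t a cst : ℝ) (E : Finset (UT n))
    (h0 : 0 ≤ pt) (h1 : pt ≤ 1) (hpp : pt ≤ pp)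
    (ht : 0 ≤ t) (htc : |t * cst| ≤ 1) :
    ∑ σ ∈ Finset.univ.filter (fun σ : UT n → Bool × Bool =>
        a ≤ |cst * ∑ e ∈ E, PTg (σ e)|), (∏ e, PTwe pt (σ e))
      ≤ 2 * Real.exp (pp * (t * cst) ^ 2 * E.card - t * a) := by
  classical
  set s1 := Finset.univ.filter (fun σ : UT n → Bool × Bool =>
    a ≤ cst * ∑ e ∈ E, PTg (σ e)) with hs1
  set s2 := Finset.univ.filter (fun σ : UT n → Bool × Bool =>
    a ≤ (-cst) * ∑ e ∈ E, PTg (σ e)) with hs2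
  have hwnn : ∀ σ : UT n → Bool × Bool, 0 ≤ ∏ e, PTwe pt (σ e) :=
    fun σ => Finset.prod_nonneg fun e _ => PTwe_nonneg h0 h1 _
  have hsub : Finset.univ.filter (fun σ : UT n → Bool × Bool =>
      a ≤ |cst * ∑ e ∈ E, PTg (σ e)|) ⊆ s1 ∪ s2 := by
    intro σ hσ
    have h := (Finset.mem_filter.mp hσ).2
    rcases le_abs.mp h with h' | h'
    · exact Finset.mem_union_left _ (Finset.mem_filter.mpr ⟨Finset.mem_univ _, h'⟩)
    · refine Finset.mem_union_right _ (Finset.mem_filter.mpr ⟨Finset.mem_univ _, ?_⟩)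
      rw [neg_mul]; exact h'
  have hunion : ∑ σ ∈ s1 ∪ s2, (∏ e, PTwe pt (σ e))
      ≤ ∑ σ ∈ s1, (∏ e, PTwe pt (σ e)) + ∑ σ ∈ s2, (∏ e, PTwe pt (σ e)) := by
    rw [← Finset.union_sdiff_self_eq_union, Finset.sum_union Finset.disjoint_sdiff]
    have h2 : ∑ σ ∈ s2 \ s1, (∏ e, PTwe pt (σ e)) ≤ ∑ σ ∈ s2, (∏ e, PTwe pt (σ e)) :=
      Finset.sum_le_sum_of_subset_of_nonneg Finset.sdiff_subset (fun σ _ _ => hwnn σ)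
    linarith
  have hb1 := PT_chernoff pt pp t a cst E h0 h1 hpp ht htc
  have hb2 := PT_chernoff pt pp t a (-cst) E h0 h1 hpp ht (by rwa [mul_neg, abs_neg])
  rw [mul_neg, neg_sq] at hb2
  have hsum1 : ∑ σ ∈ Finset.univ.filter (fun σ : UT n → Bool × Bool =>
      a ≤ |cst * ∑ e ∈ E, PTg (σ e)|), (∏ e, PTwe pt (σ e))
      ≤ ∑ σ ∈ s1 ∪ s2, (∏ e, PTwe pt (σ e)) :=
    Finset.sum_le_sum_of_subset_of_nonneg hsub (fun σ _ _ => hwnn σ)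
  calc _ ≤ ∑ σ ∈ s1 ∪ s2, (∏ e, PTwe pt (σ e)) := hsum1
    _ ≤ _ + _ := hunion
    _ ≤ _ := by rw [two_mul]; exact add_le_add hb1 hb2
end chernoff

section edges
variable {n : ℕ}

def PTedge (d : UT n) (i j : Fin n) : UT n :=
  if h : i < j then ⟨(i, j), h⟩ else if h' : j < i then ⟨(j, i), h'⟩ else d

lemma PTedge_spec (d : UT n) {i j : Fin n} (h : i ≠ j) :
    (PTedge d i j).1 = (i, j) ∨ (PTedge d i j).1 = (j, i) := by
  unfold PTedge
  rcases lt_or_gt_of_ne h with h1 | h1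
  · erw [dif_pos h1]; exact Or.inl rfl
  · erw [dif_neg (asymm h1), dif_pos h1]; exact Or.inr rfl

lemma PTedge_cases (d : UT n) {i j i' j' : Fin n} (hij : i ≠ j) (h' : i' ≠ j')
    (heq : PTedge d i j = PTedge d i' j') : (i = i' ∧ j = j') ∨ (i = j' ∧ j = i') := by
  have h1 := PTedge_spec d hij
  have h2 := PTedge_spec d h'
  rw [heq] at h1
  rcases h1 with h1 | h1 <;> rcases h2 with h2 | h2 <;>
    · rw [h1] at h2
      rw [Prod.mk.injEq] at h2
      tauto

lemma symget_PTedge (d : UT n) (σ : UT n → Bool × Bool) {i j : Fin n} (h : i ≠ j) :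
    symget (false, false) σ i j = σ (PTedge d i j) := by
  unfold symget PTedge
  rcases lt_or_gt_of_ne h with h1 | h1
  · erw [dif_pos h1, dif_pos h1]
  · erw [dif_neg (asymm h1), dif_neg (asymm h1), dif_pos h1, dif_pos h1]

lemma sgnOf_apply (d : UT n) (σ : UT n → Bool × Bool) {i j : Fin n} (h : i ≠ j) :
    sgnOf σ i j = PTg (σ (PTedge d i j)) := by
  simp only [sgnOf, Matrix.of_apply, PTg, if_neg h, symget_PTedge d σ h]

lemma sgnOf_diag (σ : UT n → Bool × Bool) (i : Fin n) : sgnOf σ i i = 0 := by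
  simp [sgnOf]

lemma sgnOf_symm (σ : UT n → Bool × Bool) (i j : Fin n) : sgnOf σ i j = sgnOf σ j i := by
  by_cases h : i = j
  · rw [h]
  · rcases lt_or_gt_of_ne h with h1 | h1
    · rw [sgnOf_apply ⟨(i, j), h1⟩ σ h, sgnOf_apply ⟨(i, j), h1⟩ σ (Ne.symm h)]
      congr 2
      unfold PTedge
      erw [dif_pos h1, dif_neg (asymm h1), dif_pos h1]
    · rw [sgnOf_apply ⟨(j, i), h1⟩ σ h, sgnOf_apply ⟨(j, i), h1⟩ σ (Ne.symm h)]
      congr 2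
      unfold PTedge
      erw [dif_neg (asymm h1), dif_pos h1, dif_pos h1]

lemma PTreindex1 (d : UT n) (x : Fin n) (A : Finset (Fin n)) (σ : UT n → Bool × Bool) :
    ∑ k ∈ A, sgnOf σ k x
      = ∑ e ∈ (A.erase x).image (fun k => PTedge d k x), PTg (σ e) := by
  rw [Finset.sum_image (fun k hk k' hk' heq => by
    rcases PTedge_cases d (Finset.ne_of_mem_erase hk) (Finset.ne_of_mem_erase hk') heq with
      ⟨h1, _⟩ | ⟨h1, h2⟩
    · exact h1
    · exact absurd h1 (Finset.ne_of_mem_erase hk))]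
  rw [← Finset.sum_erase (f := fun k => sgnOf σ k x) A (sgnOf_diag σ x)]
  exact Finset.sum_congr rfl fun k hk => sgnOf_apply d σ (Finset.ne_of_mem_erase hk)

lemma PTreindex2 (d : UT n) (A B : Finset (Fin n)) (hAB : ∀ k ∈ A, ∀ l ∈ B, k ≠ l)
    (σ : UT n → Bool × Bool) :
    ∑ k ∈ A, ∑ l ∈ B, sgnOf σ k l
      = ∑ e ∈ (A ×ˢ B).image (fun q => PTedge d q.1 q.2), PTg (σ e) := by
  rw [Finset.sum_image (fun q hq q' hq' heq => by
    obtain ⟨hq1, hq2⟩ := Finset.mem_product.mp hq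
    obtain ⟨hq1', hq2'⟩ := Finset.mem_product.mp hq'
    rcases PTedge_cases d (hAB _ hq1 _ hq2) (hAB _ hq1' _ hq2') heq with
      ⟨h1, h2⟩ | ⟨h1, h2⟩
    · exact Prod.ext h1 h2
    · exact absurd h1 (hAB _ hq1 _ hq2'))]
  rw [← Finset.sum_product' (f := fun k l => sgnOf σ k l)]
  exact Finset.sum_congr rfl fun q hq => by
    obtain ⟨hq1, hq2⟩ := Finset.mem_product.mp hq
    exact sgnOf_apply d σ (hAB _ hq1 _ hq2)

lemma PTreindex3 (d : UT n) (A : Finset (Fin n)) (σ : UT n → Bool × Bool) :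
    ∑ k ∈ A, ∑ l ∈ A, sgnOf σ k l
      = 2 * ∑ e ∈ ((A ×ˢ A).filter fun q => q.1 < q.2).image (fun q => PTedge d q.1 q.2),
          PTg (σ e) := by
  classical
  have himg : ∑ e ∈ ((A ×ˢ A).filter fun q => q.1 < q.2).image (fun q => PTedge d q.1 q.2),
      PTg (σ e) = ∑ q ∈ (A ×ˢ A).filter (fun q => q.1 < q.2), sgnOf σ q.1 q.2 := by
    rw [Finset.sum_image (fun q hq q' hq' heq => by
      have h1 := (Finset.mem_filter.mp hq).2
      have h2 := (Finset.mem_filter.mp hq').2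
      rcases PTedge_cases d (ne_of_lt h1) (ne_of_lt h2) heq with ⟨e1, e2⟩ | ⟨e1, e2⟩
      · exact Prod.ext e1 e2
      · exact absurd (e1 ▸ e2 ▸ h1) (asymm h2))]
    exact Finset.sum_congr rfl fun q hq =>
      (sgnOf_apply d σ (ne_of_lt (Finset.mem_filter.mp hq).2)).symm
  have hswap : ∑ q ∈ (A ×ˢ A).filter (fun q => ¬ q.1 < q.2), sgnOf σ q.1 q.2
      = ∑ q ∈ (A ×ˢ A).filter (fun q => q.1 < q.2), sgnOf σ q.1 q.2 := by
    have hsplit := Finset.sum_filter_add_sum_filter_not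
      ((A ×ˢ A).filter (fun q => ¬ q.1 < q.2)) (fun q => q.2 < q.1)
      (fun q => sgnOf σ q.1 q.2)
    rw [← hsplit]
    have hzero : ∑ q ∈ ((A ×ˢ A).filter (fun q => ¬ q.1 < q.2)).filter
        (fun q => ¬ q.2 < q.1), sgnOf σ q.1 q.2 = 0 := by
      apply Finset.sum_eq_zero
      intro q hq
      have h1 := (Finset.mem_filter.mp hq).2
      have h2 := (Finset.mem_filter.mp (Finset.mem_filter.mp hq).1).2
      have : q.1 = q.2 := le_antisymm (not_lt.mp h1) (not_lt.mp h2)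
      rw [← this, sgnOf_diag]
    rw [hzero, add_zero]
    apply Finset.sum_bij' (fun q _ => Prod.swap q) (fun q _ => Prod.swap q)
    · intro q hq
      have h1 := (Finset.mem_filter.mp (Finset.mem_filter.mp hq).1).1
      have h2 := (Finset.mem_filter.mp hq).2
      obtain ⟨ha, hb⟩ := Finset.mem_product.mp h1
      exact Finset.mem_filter.mpr ⟨Finset.mem_product.mpr ⟨hb, ha⟩, h2⟩
    · intro q hq
      have h1 := (Finset.mem_filter.mp hq).1
      have h2 := (Finset.mem_filter.mp hq).2
      obtain ⟨ha, hb⟩ := Finset.mem_product.mp h1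
      refine Finset.mem_filter.mpr ⟨Finset.mem_filter.mpr
        ⟨Finset.mem_product.mpr ⟨hb, ha⟩, asymm h2⟩, h2⟩
    · intro q _; exact Prod.swap_swap q
    · intro q _; exact Prod.swap_swap q
    · intro q _; exact sgnOf_symm σ q.1 q.2
  rw [himg, ← Finset.sum_product' (f := fun k l => sgnOf σ k l),
    ← Finset.sum_filter_add_sum_filter_not (A ×ˢ A) (fun q => q.1 < q.2)
      (fun q => sgnOf σ q.1 q.2), hswap]
  ring

end edges

section matrixpart
variable {n p : ℕ} (c : Fin n → Fin p)

def CAf (a : Fin p) : Finset (Fin n) := Finset.univ.filter (fun k => c k = a)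

lemma clusterSize_eq (a : Fin p) : clusterSize c a = (CAf c a).card := by
  rw [clusterSize, ← Set.ncard_coe_finset]
  congr 1
  ext k
  simp [CAf]

lemma UUt_apply (i k : Fin n) :
    (Umat c * (Umat c)ᵀ) i k
      = if c k = c i then ((clusterSize c (c i) : ℝ))⁻¹ else 0 := by
  rw [Matrix.mul_apply]
  rw [Finset.sum_eq_single (c i)
    (fun b _ hb => by simp [Umat, Matrix.transpose_apply, if_neg (Ne.symm hb)])
    (fun h => absurd (Finset.mem_univ _) h)]
  by_cases h : c k = c i
  · simp only [Umat, Matrix.transpose_apply, Matrix.of_apply, h, if_pos rfl, if_true]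
    rw [← mul_inv, Real.mul_self_sqrt (by positivity : (0:ℝ) ≤ (clusterSize c (c i) : ℝ))]
  · simp [Umat, Matrix.transpose_apply, h]

lemma UUtM_apply (M : Matrix (Fin n) (Fin n) ℝ) (i j : Fin n) :
    (Umat c * (Umat c)ᵀ * M) i j
      = ((clusterSize c (c i) : ℝ))⁻¹ * ∑ k ∈ CAf c (c i), M k j := by
  rw [Matrix.mul_apply]
  simp_rw [UUt_apply c]
  simp only [CAf]
  rw [Finset.mul_sum, Finset.sum_filter]
  apply Finset.sum_congr rfl
  intro k _
  by_cases h : c k = c i <;> simp [h]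

lemma MUUt_apply (M : Matrix (Fin n) (Fin n) ℝ) (i j : Fin n) :
    (M * (Umat c * (Umat c)ᵀ)) i j
      = ((clusterSize c (c j) : ℝ))⁻¹ * ∑ l ∈ CAf c (c j), M i l := by
  rw [Matrix.mul_apply]
  simp_rw [UUt_apply c]
  simp only [CAf]
  rw [Finset.mul_sum, Finset.sum_filter]
  apply Finset.sum_congr rfl
  intro l _
  by_cases h : c l = c j
  · simp only [h, if_pos rfl, if_true]
    ring
  · rw [if_neg (fun hh : c j = c l => h hh.symm), if_neg h, mul_zero]

lemma UUtMUUt_apply (M : Matrix (Fin n) (Fin n) ℝ) (i j : Fin n) :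
    (Umat c * (Umat c)ᵀ * M * (Umat c * (Umat c)ᵀ)) i j
      = ((clusterSize c (c i) : ℝ))⁻¹ * ((clusterSize c (c j) : ℝ))⁻¹
        * ∑ k ∈ CAf c (c i), ∑ l ∈ CAf c (c j), M k l := by
  rw [MUUt_apply c]
  simp_rw [UUtM_apply c, Finset.mul_sum]
  rw [Finset.sum_comm]
  apply Finset.sum_congr rfl
  intro k _
  apply Finset.sum_congr rfl
  intro l _
  ring

lemma PT_entry_bound (M : Matrix (Fin n) (Fin n) ℝ) (i j : Fin n) :
    |PT (Umat c) M i j|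
      ≤ ((clusterSize c (c i) : ℝ))⁻¹ * |∑ k ∈ CAf c (c i), M k j|
        + ((clusterSize c (c j) : ℝ))⁻¹ * |∑ l ∈ CAf c (c j), M i l|
        + ((clusterSize c (c i) : ℝ))⁻¹ * ((clusterSize c (c j) : ℝ))⁻¹
          * |∑ k ∈ CAf c (c i), ∑ l ∈ CAf c (c j), M k l| := by
  have h1 : PT (Umat c) M i j
      = ((clusterSize c (c i) : ℝ))⁻¹ * ∑ k ∈ CAf c (c i), M k j
        + ((clusterSize c (c j) : ℝ))⁻¹ * ∑ l ∈ CAf c (c j), M i l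
        - ((clusterSize c (c i) : ℝ))⁻¹ * ((clusterSize c (c j) : ℝ))⁻¹
          * ∑ k ∈ CAf c (c i), ∑ l ∈ CAf c (c j), M k l := by
    rw [PT, Matrix.sub_apply, Matrix.add_apply, UUtM_apply c, MUUt_apply c, UUtMUUt_apply c]
  rw [h1]
  have hk1 : (0:ℝ) ≤ ((clusterSize c (c i) : ℝ))⁻¹ := by positivity
  have hk2 : (0:ℝ) ≤ ((clusterSize c (c j) : ℝ))⁻¹ := by positivity
  have habs : ∀ x y z : ℝ, |x + y - z| ≤ |x| + |y| + |z| := by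
    intro x y z
    have h1 := abs_add_le (x + y) (-z)
    have h2 := abs_add_le x y
    rw [abs_neg] at h1
    calc |x + y - z| = |x + y + -z| := by ring_nf
      _ ≤ |x + y| + |z| := h1
      _ ≤ |x| + |y| + |z| := by linarith
  calc |_| ≤ |((clusterSize c (c i) : ℝ))⁻¹ * ∑ k ∈ CAf c (c i), M k j|
        + |((clusterSize c (c j) : ℝ))⁻¹ * ∑ l ∈ CAf c (c j), M i l|
        + |((clusterSize c (c i) : ℝ))⁻¹ * ((clusterSize c (c j) : ℝ))⁻¹
          * ∑ k ∈ CAf c (c i), ∑ l ∈ CAf c (c j), M k l| := habs _ _ _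
    _ = _ := by
          rw [abs_mul, abs_mul, abs_mul, abs_of_nonneg hk1, abs_of_nonneg hk2,
            abs_mul, abs_of_nonneg hk1, abs_of_nonneg hk2]

lemma linfNorm_le {M : Matrix (Fin n) (Fin n) ℝ} {b : ℝ} (hn : 1 ≤ n)
    (h : ∀ i j, |M i j| ≤ b) : linfNorm M ≤ b := by
  apply csSup_le
  · have : Nonempty (Fin n) := ⟨⟨0, hn⟩⟩
    exact Set.range_nonempty _
  · rintro x ⟨q, rfl⟩
    exact h q.1 q.2

lemma one_le_clusterSize (i : Fin n) : 1 ≤ clusterSize c (c i) := by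
  rw [clusterSize_eq]
  exact Finset.card_pos.mpr ⟨i, by simp [CAf]⟩

lemma KminVal_le (a : Fin p) : KminVal c ≤ clusterSize c a := Nat.sInf_le ⟨a, rfl⟩

lemma one_le_KminVal (hsurj : Function.Surjective c) (hp : 0 < p) : 1 ≤ KminVal c := by
  have hne : (Set.range fun j => clusterSize c j).Nonempty := by
    exact ⟨clusterSize c ⟨0, hp⟩, ⟨0, hp⟩, rfl⟩
  obtain ⟨a, ha⟩ := Nat.sInf_mem hne
  rw [KminVal, ← ha]
  obtain ⟨i, hi⟩ := hsurj a
  calc 1 ≤ clusterSize c (c i) := one_le_clusterSize c i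
    _ = clusterSize c a := by rw [hi]

lemma KminVal_le_card (hp : 0 < p) : KminVal c ≤ n := by
  calc KminVal c ≤ clusterSize c ⟨0, hp⟩ := KminVal_le c _
    _ ≤ n := by
        rw [clusterSize_eq]
        calc (CAf c _).card ≤ Finset.univ.card := Finset.card_le_univ _
          _ = n := by simp

end matrixpart

lemma PT_numeric {ε L p₀ V W : ℝ} (hε0 : 0 < ε) (hL : 0 < L)
    (hp : 0 ≤ p₀) (hV : 0 ≤ V) (hW : W ≤ 4 * V)
    (hCV : 1872 * L ^ 3 / ε ^ 2 ≤ p₀ * V) :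
    p₀ * (ε / (24 * L)) ^ 2 * W - ε / (24 * L) * (ε * p₀ * V / (3 * L)) ≤ -13 * L := by
  have hL2 : (0:ℝ) < 576 * L ^ 2 := by positivity
  have key : p₀ * (ε / (24 * L)) ^ 2 * W - ε / (24 * L) * (ε * p₀ * V / (3 * L))
      = (p₀ * ε ^ 2 * W - 8 * p₀ * ε ^ 2 * V) / (576 * L ^ 2) := by
    field_simp
    ring
  rw [key, div_le_iff₀ hL2]
  have h2 : 1872 * L ^ 3 ≤ p₀ * V * ε ^ 2 :=
    (div_le_iff₀ (by positivity : (0:ℝ) < ε ^ 2)).mp hCV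
  nlinarith [mul_le_mul_of_nonneg_left hW (mul_nonneg hp (sq_nonneg ε))]

lemma PT_bad_bound {n : ℕ} (pt p₀ t a cst : ℝ) (E : Finset (UT n)) (W : ℝ)
    (h0 : 0 ≤ pt) (h1 : pt ≤ 1) (hpp : pt ≤ p₀) (ht : 0 ≤ t) (htc : |t * cst| ≤ 1)
    (hW : cst ^ 2 * E.card ≤ W)
    (B : Set (UT n → Bool × Bool))
    (hB : ∀ σ ∈ B, a ≤ |cst * ∑ e ∈ E, PTg (σ e)|) :
    discMeasure (fun σ : UT n → Bool × Bool => ∏ e, PTwe pt (σ e)) B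
      ≤ ENNReal.ofReal (2 * Real.exp (p₀ * t ^ 2 * W - t * a)) := by
  classical
  have hwnn : ∀ σ : UT n → Bool × Bool, 0 ≤ ∏ e, PTwe pt (σ e) :=
    fun σ => Finset.prod_nonneg fun e _ => PTwe_nonneg h0 h1 _
  rw [discMeasure_apply _ hwnn]
  apply ENNReal.ofReal_le_ofReal
  have hsub : Finset.univ.filter (· ∈ B)
      ⊆ Finset.univ.filter (fun σ : UT n → Bool × Bool =>
          a ≤ |cst * ∑ e ∈ E, PTg (σ e)|) := by
    intro σ hσ
    exact Finset.mem_filter.mpr ⟨Finset.mem_univ _, hB σ (Finset.mem_filter.mp hσ).2⟩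
  calc ∑ σ ∈ Finset.univ.filter (· ∈ B), ∏ e, PTwe pt (σ e)
      ≤ ∑ σ ∈ Finset.univ.filter (fun σ : UT n → Bool × Bool =>
          a ≤ |cst * ∑ e ∈ E, PTg (σ e)|), ∏ e, PTwe pt (σ e) :=
        Finset.sum_le_sum_of_subset_of_nonneg hsub (fun σ _ _ => hwnn σ)
    _ ≤ 2 * Real.exp (p₀ * (t * cst) ^ 2 * E.card - t * a) :=
        PT_chernoff_abs pt p₀ t a cst E h0 h1 hpp ht htc
    _ ≤ 2 * Real.exp (p₀ * t ^ 2 * W - t * a) := by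
        have hp0 : 0 ≤ p₀ := le_trans h0 hpp
        have : p₀ * (t * cst) ^ 2 * E.card ≤ p₀ * t ^ 2 * W := by
          have h3 : (t * cst) ^ 2 * E.card = t ^ 2 * (cst ^ 2 * E.card) := by ring
          calc p₀ * (t * cst) ^ 2 * (E.card : ℝ)
              = p₀ * (t ^ 2 * (cst ^ 2 * E.card)) := by rw [mul_assoc, h3]
            _ ≤ p₀ * (t ^ 2 * W) := by
                apply mul_le_mul_of_nonneg_left _ hp0
                exact mul_le_mul_of_nonneg_left hW (sq_nonneg t)
            _ = p₀ * t ^ 2 * W := by ring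
        exact mul_le_mul_of_nonneg_left (Real.exp_le_exp.mpr (by linarith)) (by norm_num)

set_option maxHeartbeats 2000000 in
/-- `‖P_T(sgn(B*))‖_∞ ≤ ε₄ p₀ / log n` w.h.p., under the random sign model. -/
theorem PT_sgn_linf_bound :
    ∀ ε₄ : ℝ, 0 < ε₄ → ε₄ < 1 →
      ∃ C c : ℝ, 0 < C ∧ 0 < c ∧
        ∀ (n p : ℕ), 1 ≤ n → 0 < p →
        ∀ cl : Fin n → Fin p, Function.Surjective cl →
        ∀ τ p₀ : ℝ, 0 < τ → τ < 1 → 0 < p₀ → p₀ < 1 →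
        p₀ ≥ C * (n : ℝ) * (Real.log n) ^ 3 / (KminVal cl : ℝ) ^ 2 →
        p₀ ≥ C * (n : ℝ) ^ 2 * (Real.log n) ^ 3 / (KminVal cl : ℝ) ^ 4 →
        discMeasure
            (fun σ : UT n → Bool × Bool =>
              ∏ e : UT n, (if (σ e).1 then p₀ * τ else 1 - p₀ * τ) * (1 / 2))
            {σ : UT n → Bool × Bool |
              linfNorm (PT (Umat cl) (sgnOf σ)) ≤ ε₄ * p₀ / Real.log n} ≥
          ENNReal.ofReal (1 - c / (n : ℝ) ^ 10) := by
  intro ε hε0 hε1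
  refine ⟨2000 / ε ^ 4, 4, by positivity, by norm_num, ?_⟩
  intro n p hn hp cl hsurj τ p₀ hτ0 hτ1 hp00 hp01 hcond1 _hcond2
  by_cases hn1 : n = 1
  · subst hn1
    have h0 : ENNReal.ofReal (1 - 4 / ((1:ℕ):ℝ) ^ 10) = 0 := by
      rw [ENNReal.ofReal_eq_zero]
      norm_num
    rw [ge_iff_le, h0]
    exact zero_le
  have hn2 : 2 ≤ n := by omega
  have hn0 : (0:ℝ) < n := by
    have : 0 < n := by omega
    exact_mod_cast this
  have hn1R : (1:ℝ) < n := by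
    have : 1 < n := by omega
    exact_mod_cast this
  set L : ℝ := Real.log n with hLdef
  have hL : 0 < L := Real.log_pos hn1R
  have hlog2 : Real.log 2 ≤ L := by
    rw [hLdef]
    apply Real.log_le_log (by norm_num)
    exact_mod_cast hn2
  have hL3 : (0.69 : ℝ) ≤ L := le_trans (by linarith [Real.log_two_gt_d9]) hlog2
  have ht0 : 0 ≤ ε / (24 * L) := by positivity
  have ht1 : |ε / (24 * L) * 1| ≤ 1 := by
    rw [mul_one, abs_of_nonneg ht0, div_le_one (by positivity)]
    nlinarith
  have ht2 : |ε / (24 * L) * 2| ≤ 1 := by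
    rw [abs_of_nonneg (by positivity), div_mul_eq_mul_div, div_le_one (by positivity)]
    nlinarith
  have hpt0 : 0 ≤ p₀ * τ := by positivity
  have hpt1 : p₀ * τ ≤ 1 := by nlinarith
  have hptp : p₀ * τ ≤ p₀ := by nlinarith
  have hp0nn : 0 ≤ p₀ := hp00.le
  set C : ℝ := 2000 / ε ^ 4 with hCdef
  have hKmin1 : (1:ℝ) ≤ (KminVal cl : ℝ) := by
    exact_mod_cast one_le_KminVal cl hsurj hp
  have hKminn : ((KminVal cl : ℕ) : ℝ) ≤ n := by
    exact_mod_cast KminVal_le_card cl hp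
  have hcond1' : C * n * L ^ 3 ≤ p₀ * (KminVal cl : ℝ) ^ 2 := by
    rw [ge_iff_le, div_le_iff₀ (by positivity)] at hcond1
    linarith
  have hCbig : 1872 * L ^ 3 / ε ^ 2 ≤ C * L ^ 3 := by
    rw [hCdef, div_mul_eq_mul_div, div_le_div_iff₀ (by positivity) (by positivity)]
    have he2 : ε ^ 2 ≤ 1 := by nlinarith
    have he4 : ε ^ 4 ≤ ε ^ 2 := by nlinarith [sq_nonneg (ε ^ 2), sq_nonneg ε]
    nlinarith [pow_pos hL 3, mul_le_mul_of_nonneg_left he4 (le_of_lt (pow_pos hL 3))]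
  have hCpos : 0 < C := by rw [hCdef]; positivity
  have hCL3 : 0 < C * L ^ 3 := mul_pos hCpos (pow_pos hL 3)
  have hKminpos : (0:ℝ) < (KminVal cl : ℝ) := lt_of_lt_of_le one_pos hKmin1
  have hA : 1872 * L ^ 3 / ε ^ 2 ≤ p₀ * (KminVal cl : ℝ) := by
    have hst : C * L ^ 3 * (KminVal cl : ℝ) ≤ C * L ^ 3 * n :=
      mul_le_mul_of_nonneg_left hKminn hCL3.le
    have h1 : C * L ^ 3 * (KminVal cl : ℝ) ≤ p₀ * (KminVal cl : ℝ) ^ 2 := by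
      nlinarith [hcond1']
    have h2 : C * L ^ 3 ≤ p₀ * (KminVal cl : ℝ) := by nlinarith [h1, hKminpos]
    linarith
  have hB : 1872 * L ^ 3 / ε ^ 2 ≤ p₀ * ((KminVal cl : ℝ) * (KminVal cl : ℝ)) := by
    have h3 : C * L ^ 3 ≤ C * n * L ^ 3 := by
      nlinarith [mul_nonneg (by linarith : (0:ℝ) ≤ (n:ℝ) - 1) hCL3.le]
    have hsq : ((KminVal cl : ℝ)) ^ 2 = (KminVal cl : ℝ) * (KminVal cl : ℝ) := sq (KminVal cl : ℝ) ▸ rfl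
    nlinarith [hcond1']
  -- per-cluster facts
  have hKR1 : ∀ a : Fin p, (1:ℝ) ≤ (clusterSize cl a : ℝ) := by
    intro a
    obtain ⟨i, hi⟩ := hsurj a
    have := one_le_clusterSize cl i
    rw [hi] at this
    exact_mod_cast this
  have hKRmin : ∀ a : Fin p, ((KminVal cl : ℕ) : ℝ) ≤ (clusterSize cl a : ℝ) := by
    intro a
    exact_mod_cast KminVal_le cl a
  have hCV1 : ∀ a : Fin p, 1872 * L ^ 3 / ε ^ 2 ≤ p₀ * (clusterSize cl a : ℝ) := by
    intro a
    calc 1872 * L ^ 3 / ε ^ 2 ≤ p₀ * (KminVal cl : ℝ) := hA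
      _ ≤ p₀ * (clusterSize cl a : ℝ) := by
          apply mul_le_mul_of_nonneg_left (hKRmin a) hp0nn
  have hCV2 : ∀ a b : Fin p, 1872 * L ^ 3 / ε ^ 2
      ≤ p₀ * ((clusterSize cl a : ℝ) * (clusterSize cl b : ℝ)) := by
    intro a b
    calc 1872 * L ^ 3 / ε ^ 2 ≤ p₀ * ((KminVal cl : ℝ) * (KminVal cl : ℝ)) := hB
      _ ≤ p₀ * ((clusterSize cl a : ℝ) * (clusterSize cl b : ℝ)) := by
          apply mul_le_mul_of_nonneg_left _ hp0nn
          apply mul_le_mul (hKRmin a) (hKRmin b) (by linarith) (by linarith [hKR1 a])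
  -- default edge
  have h01 : (0 : ℕ) < n := by omega
  have h11 : (1 : ℕ) < n := by omega
  set d : UT n := ⟨(⟨0, h01⟩, ⟨1, h11⟩), by exact Fin.mk_lt_mk.mpr one_pos⟩ with hddef
  -- the weight function
  set wf : (UT n → Bool × Bool) → ℝ := fun σ => ∏ e, PTwe (p₀ * τ) (σ e) with hwfdef
  have hwfun : (fun σ : UT n → Bool × Bool =>
      ∏ e : UT n, (if (σ e).1 then p₀ * τ else 1 - p₀ * τ) * (1 / 2)) = wf := rfl
  rw [hwfun]
  -- bad events
  set Bad1 : Fin n × Fin p → Set (UT n → Bool × Bool) := fun q =>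
    {σ | ε * p₀ * (clusterSize cl q.2 : ℝ) / (3 * L) < |∑ k ∈ CAf cl q.2, sgnOf σ k q.1|}
    with hB1def
  set Bad2 : Fin p × Fin p → Set (UT n → Bool × Bool) := fun q =>
    {σ | ε * p₀ * ((clusterSize cl q.1 : ℝ) * (clusterSize cl q.2 : ℝ)) / (3 * L) <
      |∑ k ∈ CAf cl q.1, ∑ l ∈ CAf cl q.2, sgnOf σ k l|} with hB2def
  have hBad1 : ∀ q : Fin n × Fin p,
      discMeasure wf (Bad1 q) ≤ ENNReal.ofReal (2 * Real.exp (-(13 * L))) := by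
    rintro ⟨x, a⟩
    have hcard : (1:ℝ) ^ 2 * ((((CAf cl a).erase x).image (fun k => PTedge d k x)).card : ℝ)
        ≤ (clusterSize cl a : ℝ) := by
      rw [one_pow, one_mul, clusterSize_eq cl a]
      have h1 : (((CAf cl a).erase x).image (fun k => PTedge d k x)).card
          ≤ (CAf cl a).card :=
        le_trans Finset.card_image_le (Finset.card_erase_le ..)
      exact_mod_cast h1
    have hbb := PT_bad_bound (p₀ * τ) p₀ (ε / (24 * L))
      (ε * p₀ * (clusterSize cl a : ℝ) / (3 * L)) 1
      (((CAf cl a).erase x).image (fun k => PTedge d k x)) (clusterSize cl a : ℝ)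
      hpt0 hpt1 hptp ht0 ht1 hcard (Bad1 (x, a)) ?_
    · refine le_trans hbb (ENNReal.ofReal_le_ofReal ?_)
      apply mul_le_mul_of_nonneg_left _ (by norm_num : (0:ℝ) ≤ 2)
      apply Real.exp_le_exp.mpr
      have hnum := PT_numeric hε0 hL hp0nn (Nat.cast_nonneg _)
        (by linarith [hKR1 a] : (clusterSize cl a : ℝ) ≤ 4 * (clusterSize cl a : ℝ))
        (hCV1 a)
      linarith
    · intro σ hσ
      rw [one_mul, ← PTreindex1 d x (CAf cl a) σ]
      exact le_of_lt hσ
  have hBad2 : ∀ q : Fin p × Fin p,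
      discMeasure wf (Bad2 q) ≤ ENNReal.ofReal (2 * Real.exp (-(13 * L))) := by
    rintro ⟨a, b⟩
    by_cases hab : a = b
    · subst hab
      have hcard : (2:ℝ) ^ 2 * (((((CAf cl a) ×ˢ (CAf cl a)).filter
            (fun q => q.1 < q.2)).image (fun q => PTedge d q.1 q.2)).card : ℝ)
          ≤ 4 * ((clusterSize cl a : ℝ) * (clusterSize cl a : ℝ)) := by
        have h1 : ((((CAf cl a) ×ˢ (CAf cl a)).filter
            (fun q => q.1 < q.2)).image (fun q => PTedge d q.1 q.2)).card
            ≤ (CAf cl a).card * (CAf cl a).card := by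
          calc _ ≤ (((CAf cl a) ×ˢ (CAf cl a)).filter (fun q => q.1 < q.2)).card :=
                Finset.card_image_le
            _ ≤ ((CAf cl a) ×ˢ (CAf cl a)).card := Finset.card_filter_le _ _
            _ = (CAf cl a).card * (CAf cl a).card := Finset.card_product _ _
        have h2 : (((((CAf cl a) ×ˢ (CAf cl a)).filter
            (fun q => q.1 < q.2)).image (fun q => PTedge d q.1 q.2)).card : ℝ)
            ≤ (clusterSize cl a : ℝ) * (clusterSize cl a : ℝ) := by
          rw [clusterSize_eq cl a]
          exact_mod_cast h1
        nlinarith [h2]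
      have hbb := PT_bad_bound (p₀ * τ) p₀ (ε / (24 * L))
        (ε * p₀ * ((clusterSize cl a : ℝ) * (clusterSize cl a : ℝ)) / (3 * L)) 2
        ((((CAf cl a) ×ˢ (CAf cl a)).filter (fun q => q.1 < q.2)).image
          (fun q => PTedge d q.1 q.2))
        (4 * ((clusterSize cl a : ℝ) * (clusterSize cl a : ℝ)))
        hpt0 hpt1 hptp ht0 ht2 hcard (Bad2 (a, a)) ?_
      · refine le_trans hbb (ENNReal.ofReal_le_ofReal ?_)
        apply mul_le_mul_of_nonneg_left _ (by norm_num : (0:ℝ) ≤ 2)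
        apply Real.exp_le_exp.mpr
        have hnum := PT_numeric hε0 hL hp0nn
          (by positivity : (0:ℝ) ≤ (clusterSize cl a : ℝ) * (clusterSize cl a : ℝ))
          (le_refl (4 * ((clusterSize cl a : ℝ) * (clusterSize cl a : ℝ))))
          (hCV2 a a)
        linarith
      · intro σ hσ
        rw [← PTreindex3 d (CAf cl a) σ]
        exact le_of_lt hσ
    · have hAB : ∀ k ∈ CAf cl a, ∀ l ∈ CAf cl b, k ≠ l := by
        intro k hk l hl heq
        apply hab
        have h1 : cl k = a := (Finset.mem_filter.mp hk).2
        have h2 : cl l = b := (Finset.mem_filter.mp hl).2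
        rw [← h1, ← h2, heq]
      have hcard : (1:ℝ) ^ 2 * ((((CAf cl a) ×ˢ (CAf cl b)).image
            (fun q => PTedge d q.1 q.2)).card : ℝ)
          ≤ (clusterSize cl a : ℝ) * (clusterSize cl b : ℝ) := by
        rw [one_pow, one_mul, clusterSize_eq cl a, clusterSize_eq cl b]
        have h1 : (((CAf cl a) ×ˢ (CAf cl b)).image (fun q => PTedge d q.1 q.2)).card
            ≤ (CAf cl a).card * (CAf cl b).card := by
          calc _ ≤ ((CAf cl a) ×ˢ (CAf cl b)).card := Finset.card_image_le
            _ = _ := Finset.card_product _ _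
        exact_mod_cast h1
      have hbb := PT_bad_bound (p₀ * τ) p₀ (ε / (24 * L))
        (ε * p₀ * ((clusterSize cl a : ℝ) * (clusterSize cl b : ℝ)) / (3 * L)) 1
        (((CAf cl a) ×ˢ (CAf cl b)).image (fun q => PTedge d q.1 q.2))
        ((clusterSize cl a : ℝ) * (clusterSize cl b : ℝ))
        hpt0 hpt1 hptp ht0 ht1 hcard (Bad2 (a, b)) ?_
      · refine le_trans hbb (ENNReal.ofReal_le_ofReal ?_)
        apply mul_le_mul_of_nonneg_left _ (by norm_num : (0:ℝ) ≤ 2)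
        apply Real.exp_le_exp.mpr
        have hnum := PT_numeric hε0 hL hp0nn
          (by positivity : (0:ℝ) ≤ (clusterSize cl a : ℝ) * (clusterSize cl b : ℝ))
          (by nlinarith [hKR1 a, hKR1 b] : (clusterSize cl a : ℝ) * (clusterSize cl b : ℝ)
            ≤ 4 * ((clusterSize cl a : ℝ) * (clusterSize cl b : ℝ)))
          (hCV2 a b)
        linarith
      · intro σ hσ
        rw [one_mul, ← PTreindex2 d (CAf cl a) (CAf cl b) hAB σ]
        exact le_of_lt hσ
  -- event set
  set Ev : Set (UT n → Bool × Bool) :=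
    {σ : UT n → Bool × Bool | linfNorm (PT (Umat cl) (sgnOf σ)) ≤ ε * p₀ / L} with hEvdef
  have hsub : Evᶜ ⊆ (⋃ q : Fin n × Fin p, Bad1 q) ∪ ⋃ q : Fin p × Fin p, Bad2 q := by
    intro σ hσ
    rw [Set.mem_union]
    by_contra hb
    push_neg at hb
    obtain ⟨hb1, hb2⟩ := hb
    simp only [Set.mem_iUnion, not_exists] at hb1 hb2
    apply hσ
    show linfNorm (PT (Umat cl) (sgnOf σ)) ≤ ε * p₀ / L
    apply linfNorm_le hn
    intro i j
    have g1 : |∑ k ∈ CAf cl (cl i), sgnOf σ k j|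
        ≤ ε * p₀ * (clusterSize cl (cl i) : ℝ) / (3 * L) := not_lt.mp (hb1 (j, cl i))
    have g2' : |∑ l ∈ CAf cl (cl j), sgnOf σ l i|
        ≤ ε * p₀ * (clusterSize cl (cl j) : ℝ) / (3 * L) := not_lt.mp (hb1 (i, cl j))
    have g2 : |∑ l ∈ CAf cl (cl j), sgnOf σ i l|
        ≤ ε * p₀ * (clusterSize cl (cl j) : ℝ) / (3 * L) := by
      rw [Finset.sum_congr rfl (fun l _ => sgnOf_symm σ i l)]
      exact g2'
    have g3 : |∑ k ∈ CAf cl (cl i), ∑ l ∈ CAf cl (cl j), sgnOf σ k l|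
        ≤ ε * p₀ * ((clusterSize cl (cl i) : ℝ) * (clusterSize cl (cl j) : ℝ)) / (3 * L) :=
      not_lt.mp (hb2 (cl i, cl j))
    have hKi : (1:ℝ) ≤ (clusterSize cl (cl i) : ℝ) := hKR1 (cl i)
    have hKj : (1:ℝ) ≤ (clusterSize cl (cl j) : ℝ) := hKR1 (cl j)
    have hKipos : (0:ℝ) < (clusterSize cl (cl i) : ℝ) := by linarith
    have hKjpos : (0:ℝ) < (clusterSize cl (cl j) : ℝ) := by linarith
    calc |PT (Umat cl) (sgnOf σ) i j| ≤ _ := PT_entry_bound cl (sgnOf σ) i j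
      _ ≤ ((clusterSize cl (cl i) : ℝ))⁻¹
            * (ε * p₀ * (clusterSize cl (cl i) : ℝ) / (3 * L))
          + ((clusterSize cl (cl j) : ℝ))⁻¹
            * (ε * p₀ * (clusterSize cl (cl j) : ℝ) / (3 * L))
          + ((clusterSize cl (cl i) : ℝ))⁻¹ * ((clusterSize cl (cl j) : ℝ))⁻¹
            * (ε * p₀ * ((clusterSize cl (cl i) : ℝ) * (clusterSize cl (cl j) : ℝ)) / (3 * L)) := by
          have n1 : (0:ℝ) ≤ ((clusterSize cl (cl i) : ℝ))⁻¹ := by positivity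
          have n2 : (0:ℝ) ≤ ((clusterSize cl (cl j) : ℝ))⁻¹ := by positivity
          exact add_le_add (add_le_add (mul_le_mul_of_nonneg_left g1 n1)
            (mul_le_mul_of_nonneg_left g2 n2))
            (mul_le_mul_of_nonneg_left g3 (mul_nonneg n1 n2))
      _ = ε * p₀ / L := by
          field_simp
          ring
  have hwnnwf : ∀ σ : UT n → Bool × Bool, 0 ≤ wf σ :=
    fun σ => Finset.prod_nonneg fun e _ => PTwe_nonneg hpt0 hpt1 _
  have huniv : discMeasure wf Set.univ = 1 := by
    rw [discMeasure_univ _ hwnnwf]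
    have htot : ∑ σ : UT n → Bool × Bool, wf σ = 1 := by
      calc ∑ σ : UT n → Bool × Bool, ∏ e, PTwe (p₀ * τ) (σ e)
          = ∏ e : UT n, ∑ b, PTwe (p₀ * τ) b := (Fintype.prod_sum _).symm
        _ = ∏ _e : UT n, (1:ℝ) := Finset.prod_congr rfl (fun e _ => PTwe_sum _)
        _ = 1 := Finset.prod_const_one
    rw [htot, ENNReal.ofReal_one]
  have hexp13 : Real.exp (-(13 * L)) = ((n:ℝ) ^ 13)⁻¹ := by
    rw [Real.exp_neg]
    congr 1
    rw [show (13 : ℝ) * L = ((13:ℕ):ℝ) * L by norm_num, Real.exp_nat_mul, hLdef,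
      Real.exp_log hn0]
  have hpn' : p ≤ n := by
    have := Fintype.card_le_of_surjective cl hsurj
    simpa using this
  have hcompl : discMeasure wf Evᶜ ≤ ENNReal.ofReal (4 / (n:ℝ) ^ 10) := by
    calc discMeasure wf Evᶜ
        ≤ discMeasure wf ((⋃ q : Fin n × Fin p, Bad1 q) ∪ ⋃ q : Fin p × Fin p, Bad2 q) :=
          measure_mono hsub
      _ ≤ discMeasure wf (⋃ q : Fin n × Fin p, Bad1 q)
          + discMeasure wf (⋃ q : Fin p × Fin p, Bad2 q) := measure_union_le _ _
      _ ≤ (∑' q : Fin n × Fin p, discMeasure wf (Bad1 q))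
          + ∑' q : Fin p × Fin p, discMeasure wf (Bad2 q) :=
          add_le_add (measure_iUnion_le _) (measure_iUnion_le _)
      _ = (∑ q : Fin n × Fin p, discMeasure wf (Bad1 q))
          + ∑ q : Fin p × Fin p, discMeasure wf (Bad2 q) := by
          rw [tsum_fintype, tsum_fintype]
      _ ≤ (∑ _q : Fin n × Fin p, ENNReal.ofReal (2 * Real.exp (-(13 * L))))
          + ∑ _q : Fin p × Fin p, ENNReal.ofReal (2 * Real.exp (-(13 * L))) :=
          add_le_add (Finset.sum_le_sum fun q _ => hBad1 q)
            (Finset.sum_le_sum fun q _ => hBad2 q)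
      _ = ((n : ENNReal) * (p : ENNReal)) * ENNReal.ofReal (2 * Real.exp (-(13 * L)))
          + ((p : ENNReal) * (p : ENNReal)) * ENNReal.ofReal (2 * Real.exp (-(13 * L))) := by
          simp only [Finset.sum_const, Finset.card_univ, Fintype.card_prod, Fintype.card_fin,
            nsmul_eq_mul, Nat.cast_mul]
      _ ≤ ENNReal.ofReal (4 / (n:ℝ) ^ 10) := by
          rw [← ENNReal.ofReal_natCast n, ← ENNReal.ofReal_natCast p,
            ← ENNReal.ofReal_mul (by positivity), ← ENNReal.ofReal_mul (by positivity),
            ← ENNReal.ofReal_mul (by positivity), ← ENNReal.ofReal_mul (by positivity),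
            ← ENNReal.ofReal_add (by positivity) (by positivity)]
          apply ENNReal.ofReal_le_ofReal
          rw [hexp13]
          have hpnR : (p:ℝ) ≤ n := by exact_mod_cast hpn'
          have hppos : (0:ℝ) ≤ (p:ℝ) := by positivity
          have hinv : (0:ℝ) ≤ ((n:ℝ) ^ 13)⁻¹ := by positivity
          calc ((n:ℝ) * (p:ℝ)) * (2 * ((n:ℝ) ^ 13)⁻¹)
                + ((p:ℝ) * (p:ℝ)) * (2 * ((n:ℝ) ^ 13)⁻¹)
              ≤ (2 * (n:ℝ) ^ 2) * (2 * ((n:ℝ) ^ 13)⁻¹) := by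
                have hcomb : ((n:ℝ) * p + (p:ℝ) * p) ≤ 2 * (n:ℝ) ^ 2 := by nlinarith
                nlinarith [mul_le_mul_of_nonneg_right hcomb
                  (by positivity : (0:ℝ) ≤ 2 * ((n:ℝ) ^ 13)⁻¹)]
            _ = 4 / (n:ℝ) ^ 11 := by
                field_simp
                ring
            _ ≤ 4 / (n:ℝ) ^ 10 := by
                apply div_le_div_of_nonneg_left (by norm_num) (by positivity)
                exact pow_le_pow_right₀ hn1R.le (by norm_num)
  have hone : (1:ENNReal) ≤ discMeasure wf Ev + discMeasure wf Evᶜ := by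
    calc (1:ENNReal) = discMeasure wf Set.univ := huniv.symm
      _ = discMeasure wf (Ev ∪ Evᶜ) := by rw [Set.union_compl_self]
      _ ≤ _ := measure_union_le _ _
  rw [ge_iff_le]
  calc ENNReal.ofReal (1 - 4 / (n:ℝ) ^ 10)
      = 1 - ENNReal.ofReal (4 / (n:ℝ) ^ 10) := by
        rw [ENNReal.ofReal_sub _ (by positivity), ENNReal.ofReal_one]
    _ ≤ discMeasure wf Ev := by
        rw [tsub_le_iff_right]
        calc (1:ENNReal) ≤ discMeasure wf Ev + discMeasure wf Evᶜ := hone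
          _ ≤ discMeasure wf Ev + ENNReal.ofReal (4 / (n:ℝ) ^ 10) :=
              add_le_add (le_refl _) hcompl
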